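/- For every $k \ge 0$ and all reals $0 \le x \le y$, $|f_k(x) - f_k(y)| \le (\mathbf{1}\{x \le 2k\} + f_k(x))\,(y - x)$, where $f_k(u) = e^{-u} u^k / k!$. -/

import Mathlib

/-!
Since `f_k' = f_{k-1} - f_k` with both terms in `[0, 1]`, `f_k` is `1`-Lipschitz on `[0, ∞)`,
which settles the case `x ≤ 2k`. For `x > 2k ≥ k` the density is decreasing on `[x, y]`, and
`f_k(y) ≥ e^{x-y} f_k(x)` because `y^k ≥ x^k`; hence
`0 ≤ f_k(x) - f_k(y) ≤ (1 - e^{x-y}) f_k(x) ≤ (y - x) f_k(x)`.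
-/

open Real Set

noncomputable def poissonDensity (k : ℕ) (u : ℝ) : ℝ :=
  exp (-u) * u ^ k / k.factorial

lemma poissonDensity_nonneg (k : ℕ) {u : ℝ} (hu : 0 ≤ u) : 0 ≤ poissonDensity k u := by
  unfold poissonDensity; positivity

lemma poissonDensity_le_one (k : ℕ) {u : ℝ} (hu : 0 ≤ u) : poissonDensity k u ≤ 1 := by
  have hterm : u ^ k / k.factorial ≤ exp u :=
    (Finset.single_le_sum (f := fun i => u ^ i / (i.factorial : ℝ)) (fun i _ => by positivity)
      (Finset.self_mem_range_succ k)).trans (sum_le_exp_of_nonneg hu (k + 1))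
  calc poissonDensity k u = exp (-u) * (u ^ k / k.factorial) := mul_div_assoc _ _ _
    _ ≤ exp (-u) * exp u := by gcongr
    _ = 1 := by rw [← exp_add, neg_add_cancel, exp_zero]

lemma succ_mul_poissonDensity_succ (k : ℕ) (u : ℝ) :
    (k + 1) * poissonDensity (k + 1) u = u * poissonDensity k u := by
  unfold poissonDensity
  rw [Nat.factorial_succ]
  push_cast
  field_simp
  ring

lemma hasDerivAt_poissonDensity_zero (u : ℝ) :
    HasDerivAt (poissonDensity 0) (-poissonDensity 0 u) u := by
  have h : poissonDensity 0 = fun u => exp (-u) := by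
    funext u; simp [poissonDensity]
  simpa [h] using (hasDerivAt_neg u).exp

lemma hasDerivAt_poissonDensity_succ (k : ℕ) (u : ℝ) :
    HasDerivAt (poissonDensity (k + 1)) (poissonDensity k u - poissonDensity (k + 1) u) u := by
  have h := (((hasDerivAt_neg u).exp).mul (hasDerivAt_pow (k + 1) u)).div_const
    ((k + 1).factorial : ℝ)
  refine h.congr_deriv ?_
  simp only [poissonDensity, Nat.factorial_succ]
  push_cast
  field_simp
  ring

lemma lipschitzOnWith_one_poissonDensity (k : ℕ) :
    LipschitzOnWith 1 (poissonDensity k) (Ici 0) := by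
  rcases k with _ | k
  · refine (convex_Ici 0).lipschitzOnWith_of_nnnorm_hasDerivWithin_le
      (fun u _ => (hasDerivAt_poissonDensity_zero u).hasDerivWithinAt) fun u hu => ?_
    rw [← NNReal.coe_le_coe, coe_nnnorm, norm_neg, norm_of_nonneg (poissonDensity_nonneg 0 hu)]
    exact poissonDensity_le_one 0 hu
  · refine (convex_Ici 0).lipschitzOnWith_of_nnnorm_hasDerivWithin_le
      (fun u _ => (hasDerivAt_poissonDensity_succ k u).hasDerivWithinAt) fun u hu => ?_
    rw [← NNReal.coe_le_coe, coe_nnnorm, NNReal.coe_one, norm_eq_abs]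
    simpa using abs_sub_le_of_le_of_le (poissonDensity_nonneg k hu) (poissonDensity_le_one k hu)
      (poissonDensity_nonneg (k + 1) hu) (poissonDensity_le_one (k + 1) hu)

lemma antitoneOn_poissonDensity (k : ℕ) : AntitoneOn (poissonDensity k) (Ici k) := by
  have hcont := (lipschitzOnWith_one_poissonDensity k).continuousOn.mono
    (Ici_subset_Ici.2 k.cast_nonneg)
  rcases k with _ | k
  · refine antitoneOn_of_hasDerivWithinAt_nonpos (convex_Ici _) hcont
      (fun u _ => (hasDerivAt_poissonDensity_zero u).hasDerivWithinAt) fun u hu => ?_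
    rw [interior_Ici, mem_Ioi, Nat.cast_zero] at hu
    exact neg_nonpos.2 (poissonDensity_nonneg 0 hu.le)
  · refine antitoneOn_of_hasDerivWithinAt_nonpos (convex_Ici _) hcont
      (fun u _ => (hasDerivAt_poissonDensity_succ k u).hasDerivWithinAt) fun u hu => ?_
    rw [interior_Ici, mem_Ioi, Nat.cast_succ] at hu
    have hk : (0 : ℝ) < k + 1 := k.cast_add_one_pos
    have hfk := poissonDensity_nonneg k (hk.trans hu).le
    have hmul : (k + 1) * poissonDensity k u ≤ (k + 1) * poissonDensity (k + 1) u := by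
      rw [succ_mul_poissonDensity_succ]; gcongr
    linarith [le_of_mul_le_mul_left hmul hk]

lemma poissonDensity_mul_exp_sub_le (k : ℕ) {x y : ℝ} (hx : 0 ≤ x) (hxy : x ≤ y) :
    poissonDensity k x * exp (x - y) ≤ poissonDensity k y := by
  calc poissonDensity k x * exp (x - y) = exp (-y) * x ^ k / k.factorial := by
        unfold poissonDensity
        rw [div_mul_eq_mul_div, mul_right_comm, ← exp_add]
        ring_nf
    _ ≤ poissonDensity k y := by unfold poissonDensity; gcongr

theorem poisson_density_lipschitz_bound (k : ℕ) (x y : ℝ) (hx : 0 ≤ x) (hxy : x ≤ y) :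
    |Real.exp (-x) * x ^ k / (Nat.factorial k) - Real.exp (-y) * y ^ k / (Nat.factorial k)| ≤
      ((if x ≤ 2 * k then (1 : ℝ) else 0) + Real.exp (-x) * x ^ k / (Nat.factorial k)) * (y - x) := by
  change |poissonDensity k x - poissonDensity k y| ≤
    ((if x ≤ 2 * k then (1 : ℝ) else 0) + poissonDensity k x) * (y - x)
  have hfx := poissonDensity_nonneg k hx
  split_ifs with hk
  · calc |poissonDensity k x - poissonDensity k y| ≤ y - x := by
          simpa [dist_eq_norm, abs_sub_comm x, abs_of_nonneg (sub_nonneg.2 hxy)] using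
            (lipschitzOnWith_one_poissonDensity k).dist_le_mul x hx y (hx.trans hxy)
      _ ≤ (1 + poissonDensity k x) * (y - x) :=
          le_mul_of_one_le_left (sub_nonneg.2 hxy) (le_add_of_nonneg_right hfx)
  · have hkx : (k : ℝ) ≤ x := by linarith [k.cast_nonneg (α := ℝ)]
    have hdecr := antitoneOn_poissonDensity k hkx (hkx.trans hxy) hxy
    rw [zero_add, abs_of_nonneg (sub_nonneg.2 hdecr)]
    calc poissonDensity k x - poissonDensity k y
        ≤ poissonDensity k x * (1 - exp (x - y)) := by
          rw [mul_one_sub]; linarith [poissonDensity_mul_exp_sub_le k hx hxy]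
      _ ≤ poissonDensity k x * (y - x) :=
          mul_le_mul_of_nonneg_left (by linarith [add_one_le_exp (x - y)]) hfx
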